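/- Let H = {H₁, H₂} be a pair of connected graphs such that for some n₀ every 2-connected H-free graph of order at least n₀ has a dominating cycle, and suppose H₁ has diameter at least 3. Then H₂ is an induced subgraph of K₁ + 3K₂ or H₂ is isomorphic to K₄ minus an edge. -/

import Mathlib

open SimpleGraph

def IsCycleEmb {V : Type*} (G : SimpleGraph V) (n : ℕ) (f : ZMod n → V) : Prop :=
  3 ≤ n ∧ Function.Injective f ∧ ∀ i : ZMod n, G.Adj (f i) (f (i + 1))

def IsLongestCycle {V : Type*} (G : SimpleGraph V) (n : ℕ) (f : ZMod n → V) : Prop :=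
  IsCycleEmb G n f ∧ ∀ (m : ℕ) (g : ZMod m → V), IsCycleEmb G m g → m ≤ n

def IsDominatingCycle {V : Type*} (G : SimpleGraph V) (n : ℕ) (f : ZMod n → V) : Prop :=
  IsCycleEmb G n f ∧ ∀ a b : V, G.Adj a b → a ∈ Set.range f ∨ b ∈ Set.range f

def IsCompOutside {V : Type*} (G : SimpleGraph V) (C : Set V) (H : Set V) : Prop :=
  H.Nonempty ∧ Disjoint H C ∧ (G.induce H).Connected ∧
    ∀ a ∈ H, ∀ b : V, G.Adj a b → b ∉ C → b ∈ H

def TwoConnected {V : Type*} (G : SimpleGraph V) : Prop :=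
  3 ≤ Nat.card V ∧ ∀ v : V, (G.induce ({v}ᶜ : Set V)).Connected

def KConnected {V : Type*} (G : SimpleGraph V) (k : ℕ) : Prop :=
  k < Nat.card V ∧ ∀ S : Set V, S.ncard < k → (G.induce (Sᶜ : Set V)).Connected

def HFree {W V : Type*} (H : SimpleGraph W) (G : SimpleGraph V) : Prop :=
  ¬ Nonempty (H ↪g G)

def IsCompleteMultipartite {V : Type*} (G : SimpleGraph V) : Prop :=
  ∃ s : Setoid V, ∀ a b : V, G.Adj a b ↔ ¬ s.r a b

/-- `W = K₁ + 3K₂`: vertex 0 joined to three disjoint edges 12, 34, 56. -/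
def Wgraph : SimpleGraph (Fin 7) :=
  SimpleGraph.fromRel (fun a b =>
    a = 0 ∨ (a = 1 ∧ b = 2) ∨ (a = 3 ∧ b = 4) ∨ (a = 5 ∧ b = 6))

/-- `Z₁`, the paw: triangle 012 plus pendant edge 23. -/
def pawGraph : SimpleGraph (Fin 4) :=
  SimpleGraph.fromRel (fun a b =>
    (a = 0 ∧ b = 1) ∨ (a = 1 ∧ b = 2) ∨ (a = 0 ∧ b = 2) ∨ (a = 2 ∧ b = 3))

/-- The claw `K₁,₃`. -/
def clawGraph : SimpleGraph (Fin 4) :=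
  SimpleGraph.fromRel (fun a _ => a = 0)

/-- `K₄` minus the edge 23. -/
def K4minusGraph : SimpleGraph (Fin 4) :=
  SimpleGraph.fromRel (fun a b => ¬((a = 2 ∧ b = 3) ∨ (a = 3 ∧ b = 2)))

/-- `K₁,₃**`: spider with legs of lengths 2, 2, 1 (center 0, legs 0-1-2, 0-3-4, 0-5). -/
def spider221 : SimpleGraph (Fin 6) :=
  SimpleGraph.fromRel (fun a b =>
    (a = 0 ∧ b = 1) ∨ (a = 1 ∧ b = 2) ∨ (a = 0 ∧ b = 3) ∨ (a = 3 ∧ b = 4) ∨ (a = 0 ∧ b = 5))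

/-- The theta graph `A_s`: two vertices joined by three internally disjoint paths,
each with `s` internal vertices. -/
def thetaGraph (s : ℕ) : SimpleGraph (Fin 2 ⊕ Fin 3 × Fin s) :=
  SimpleGraph.fromRel (fun a b =>
    (∃ (j : Fin 3) (k : Fin s), a = Sum.inl 0 ∧ b = Sum.inr (j, k) ∧ (k : ℕ) = 0) ∨
    (∃ (j : Fin 3) (k : Fin s), a = Sum.inl 1 ∧ b = Sum.inr (j, k) ∧ (k : ℕ) = s - 1) ∨
    (∃ (j : Fin 3) (k l : Fin s), a = Sum.inr (j, k) ∧ b = Sum.inr (j, l) ∧ (l : ℕ) = (k : ℕ) + 1))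

/-- `A′_s = 2K₁ + sK₂`. -/
def APrime (s : ℕ) : SimpleGraph (Fin 2 ⊕ Fin s × Fin 2) :=
  SimpleGraph.fromRel (fun a b =>
    (∃ (i : Fin 2) (x : Fin s × Fin 2), a = Sum.inl i ∧ b = Sum.inr x) ∨
    (∃ j : Fin s, a = Sum.inr (j, 0) ∧ b = Sum.inr (j, 1)))

/-- `A″_s = K₂ + (2K₂ ∪ K_s)`. -/
def ADoublePrime (s : ℕ) : SimpleGraph (Fin 2 ⊕ (Fin 2 × Fin 2 ⊕ Fin s)) :=
  SimpleGraph.fromRel (fun a b =>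
    (∃ i : Fin 2, a = Sum.inl i) ∨
    (∃ j : Fin 2, a = Sum.inr (Sum.inl (j, 0)) ∧ b = Sum.inr (Sum.inl (j, 1))) ∨
    (∃ p q : Fin s, a = Sum.inr (Sum.inr p) ∧ b = Sum.inr (Sum.inr q)))

/-- `A_s⁽¹⁾`: two disjoint triangles joined by three vertex-disjoint paths with `s`
internal vertices each. -/
def AOne (s : ℕ) : SimpleGraph (Fin 2 × Fin 3 ⊕ Fin 3 × Fin s) :=
  SimpleGraph.fromRel (fun a b =>
    (∃ (t : Fin 2) (i j : Fin 3), a = Sum.inl (t, i) ∧ b = Sum.inl (t, j)) ∨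
    (∃ (j : Fin 3) (k : Fin s), a = Sum.inl (0, j) ∧ b = Sum.inr (j, k) ∧ (k : ℕ) = 0) ∨
    (∃ (j : Fin 3) (k : Fin s), a = Sum.inl (1, j) ∧ b = Sum.inr (j, k) ∧ (k : ℕ) = s - 1) ∨
    (∃ (j : Fin 3) (k l : Fin s), a = Sum.inr (j, k) ∧ b = Sum.inr (j, l) ∧ (l : ℕ) = (k : ℕ) + 1))

/-- `A_s⁽⁵⁾`: vertices `x₁, x₂` and `y_{i,j}`; edges `x₁x₂`, `y_{1,j}y_{2,j}`, `x_i y_{i,j}`. -/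
def AFive (s : ℕ) : SimpleGraph (Fin 2 ⊕ Fin 2 × Fin s) :=
  SimpleGraph.fromRel (fun a b =>
    (a = Sum.inl 0 ∧ b = Sum.inl 1) ∨
    (∃ j : Fin s, a = Sum.inr (0, j) ∧ b = Sum.inr (1, j)) ∨
    (∃ (i : Fin 2) (j : Fin s), a = Sum.inl i ∧ b = Sum.inr (i, j)))

/-! Since `H₁` has diameter at least 3, it contains an induced `P₄` (the start of a shortest path).
The graphs `A′_s = 2K₁ + sK₂` and `A″_s = K₂ + (2K₂ ∪ K_s)` both join two hubs to a cluster graph,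
so they are `P₄`-free and 2-connected, and they have no dominating cycle: a cycle through three
blocks must leave each of them through one of only two hubs. Hence for large `s` the graph `H₂`
is an induced subgraph of both. If `H₂` avoids a hub of `A′_s`, its vertices lie in at most three
blocks, since vertices in distinct blocks are independent and `A″_s` has independence number `3`;
this embeds `H₂` in `K₁ + 3K₂`. If `H₂` contains both hubs of `A′_s`, each further vertex is a
common neighbour of two non-adjacent vertices of `A″_s`, hence a hub of `A″_s`, and `H₂` is `P₃`
or `K₄⁻`. -/

section InducedP4

variable {V V' : Type*}

/-- `a b c d` induces a path `P₄`; distinctness of the four vertices follows from the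
(non-)adjacencies. -/
def HasInducedP4 (G : SimpleGraph V) : Prop :=
  ∃ a b c d, G.Adj a b ∧ G.Adj b c ∧ G.Adj c d ∧ ¬G.Adj a c ∧ ¬G.Adj b d ∧ ¬G.Adj a d

lemma HasInducedP4.map {G : SimpleGraph V} {G' : SimpleGraph V'} (f : G ↪g G')
    (h : HasInducedP4 G) : HasInducedP4 G' := by
  obtain ⟨a, b, c, d, h⟩ := h
  exact ⟨f a, f b, f c, f d, by simpa only [f.map_adj_iff] using h⟩

lemma hasInducedP4_of_three_le_dist {G : SimpleGraph V} (hG : G.Connected) {a b : V}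
    (h : 3 ≤ G.dist a b) : HasInducedP4 G := by
  obtain ⟨p, hp⟩ := hG.exists_walk_length_eq_dist a b
  match p, hp with
  | .nil, hp | .cons _ .nil, hp | .cons _ (.cons _ .nil), hp =>
    simp only [Walk.length_cons, Walk.length_nil] at hp; omega
  | .cons h₁ (.cons h₂ (.cons h₃ q)), hp =>
    simp only [Walk.length_cons] at hp
    refine ⟨_, _, _, _, h₁, h₂, h₃, fun h => ?_, fun h => ?_, fun h => ?_⟩
    · have := dist_le (.cons h (.cons h₃ q)); simp only [Walk.length_cons] at this; omega
    · have := dist_le (.cons h₁ (.cons h q)); simp only [Walk.length_cons] at this; omega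
    · have := dist_le (.cons h q); simp only [Walk.length_cons] at this; omega

end InducedP4

section Cycles

open Function

variable {V : Type*} {G : SimpleGraph V} {n : ℕ} {f : ZMod n → V}

lemma IsCycleEmb.exists_exit (hf : IsCycleEmb G n f) {C X : Set V}
    (hC : ∀ u ∈ C, ∀ v, G.Adj u v → v ∉ C → v ∈ X) {i j : ZMod n} (hi : f i ∈ C)
    (hj : f j ∉ C) : ∃ k, f k ∈ X ∧ f (k - 1) ∈ C := by
  have : NeZero n := ⟨by have := hf.1; omega⟩
  by_contra! hno
  have hstay : ∀ m : ℕ, f (i + m) ∈ C := by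
    intro m
    induction m with
    | zero => simpa using hi
    | succ m ih =>
      by_contra hout
      have hX := hC _ ih _ (by simpa [add_assoc] using hf.2.2 (i + m)) hout
      exact hno _ hX (by simpa [← add_assoc] using ih)
  exact hj (by simpa using hstay (j - i).val)

lemma IsCycleEmb.card_le_of_pieces (hf : IsCycleEmb G n f) {ι : Type*} [Fintype ι]
    [Nontrivial ι] (C : ι → Set V) (hdisj : Pairwise (Disjoint on C)) (X : Finset V)
    (hC : ∀ k, ∀ u ∈ C k, ∀ v, G.Adj u v → v ∉ C k → v ∈ X) (hmeet : ∀ k, ∃ i, f i ∈ C k) :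
    Fintype.card ι ≤ X.card := by
  have hexit : ∀ k, ∃ i, f i ∈ (X : Set V) ∧ f (i - 1) ∈ C k := by
    intro k
    obtain ⟨k', hk'⟩ := exists_ne k
    obtain ⟨i, hi⟩ := hmeet k
    obtain ⟨j, hj⟩ := hmeet k'
    exact hf.exists_exit (hC k) hi ((hdisj hk').notMem_of_mem_left hj)
  choose g hgX hgC using hexit
  have hinj : Set.InjOn (fun k => f (g k)) (Finset.univ : Finset ι) := by
    intro k _ l _ hkl
    have hg : g k = g l := hf.2.1 hkl
    by_contra hne
    exact (hdisj hne).notMem_of_mem_left (hgC k) (hg ▸ hgC l)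
  simpa using Finset.card_le_card_of_injOn _ (fun k _ => hgX k) hinj

end Cycles

section HubClusterJoin

open Sum Function

variable {β γ : Type*} {G : SimpleGraph (Fin 2 ⊕ β)} {blk : β → γ}

/-- `G` is the join of the two hubs `inl 0, inl 1` with the cluster graph on `β` whose cliques
are the fibres of `blk`; the hubs themselves may or may not be adjacent. -/
structure IsHubClusterJoin (G : SimpleGraph (Fin 2 ⊕ β)) (blk : β → γ) : Prop where
  adj_inl_inr : ∀ i b, G.Adj (inl i) (inr b)
  adj_inr_inr : ∀ b c, G.Adj (inr b) (inr c) ↔ b ≠ c ∧ blk b = blk c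

namespace IsHubClusterJoin

variable (hG : IsHubClusterJoin G blk)
include hG

lemma adj_of_isLeft_ne {x y : Fin 2 ⊕ β} (h : x.isLeft ≠ y.isLeft) : G.Adj x y := by
  rcases x with i | b <;> rcases y with j | c
  · simp at h
  · exact hG.adj_inl_inr i c
  · exact (hG.adj_inl_inr j b).symm
  · simp at h

lemma not_hasInducedP4 : ¬HasInducedP4 G := by
  -- non-adjacent vertices lie on the same side of the join, and the non-edges `ac, bd, ad` of
  -- a `P₄` connect all four vertices
  rintro ⟨a, b, c, d, hab, hbc, hcd, hac, hbd, had⟩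
  have hsame : ∀ {x y}, ¬G.Adj x y → x.isLeft = y.isLeft := fun h =>
    not_not.mp (mt hG.adj_of_isLeft_ne h)
  have hac' := hsame hac
  have hbd' := hsame hbd
  have had' := hsame had
  rcases a with i | a <;> rcases b with j | b <;> rcases c with k | c <;>
    rcases d with l | d <;> simp only [isLeft_inl, isLeft_inr] at hac' hbd' had' <;>
    try contradiction
  · have hij : i ≠ j := fun h => hab.ne (congrArg inl h)
    have hjk : j ≠ k := fun h => hbc.ne (congrArg inl h)
    have hik : i ≠ k := by rintro rfl; exact had hcd
    omega
  · rw [hG.adj_inr_inr] at hab hbc hac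
    exact hac ⟨by rintro rfl; exact had hcd, hab.2.trans hbc.2⟩

lemma twoConnected [Finite β] [Nontrivial β] : TwoConnected G := by
  refine ⟨?_, fun v => ?_⟩
  · have := Finite.one_lt_card (α := β)
    rw [Nat.card_sum, Nat.card_eq_fintype_card (α := Fin 2), Fintype.card_fin]
    omega
  obtain ⟨i, hi⟩ : ∃ i : Fin 2, inl i ≠ v := by
    rcases v with j | b
    · exact ⟨j + 1, by simp⟩
    · exact ⟨0, by simp⟩
  obtain ⟨b, hb⟩ : ∃ b : β, inr b ≠ v := by
    rcases v with j | c
    · exact ⟨Classical.arbitrary β, by simp⟩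
    · obtain ⟨b, hb⟩ := exists_ne c
      exact ⟨b, by simpa using hb⟩
  rw [connected_iff_exists_forall_reachable]
  refine ⟨⟨inl i, hi⟩, ?_⟩
  rintro ⟨w | c, hw⟩
  · rcases eq_or_ne w i with rfl | -
    · rfl
    · have h₁ : (G.induce {v}ᶜ).Adj ⟨inl i, hi⟩ ⟨inr b, hb⟩ := hG.adj_inl_inr i b
      have h₂ : (G.induce {v}ᶜ).Adj ⟨inr b, hb⟩ ⟨inl w, hw⟩ := (hG.adj_inl_inr w b).symm
      exact h₁.reachable.trans h₂.reachable
  · exact Adj.reachable (hG.adj_inl_inr i c)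

lemma not_isDominatingCycle (b b' : Fin 3 → β) (hne : ∀ k, b k ≠ b' k)
    (hblk : ∀ k, blk (b k) = blk (b' k)) (hinj : Injective (blk ∘ b)) {n : ℕ}
    (f : ZMod n → Fin 2 ⊕ β) : ¬IsDominatingCycle G n f := by
  classical
  rintro ⟨hf, hdom⟩
  let C : Fin 3 → Set (Fin 2 ⊕ β) := fun k => inr '' {c | blk c = blk (b k)}
  have hdisj : Pairwise (Disjoint on C) := by
    intro k l hkl
    refine Set.disjoint_left.mpr ?_
    rintro _ ⟨c, hc, rfl⟩ ⟨d, hd, hdc⟩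
    cases inr_injective hdc
    exact hkl (hinj (hc.symm.trans hd))
  have hC : ∀ k, ∀ u ∈ C k, ∀ v, G.Adj u v → v ∉ C k →
      v ∈ (({inl 0, inl 1} : Finset (Fin 2 ⊕ β)) : Set (Fin 2 ⊕ β)) := by
    rintro k _ ⟨c, hc, rfl⟩ (j | d) hadj hout
    · fin_cases j <;> simp
    · exact absurd ⟨d, ((hG.adj_inr_inr c d).mp hadj).2.symm.trans hc, rfl⟩ hout
  have hmeet : ∀ k, ∃ i, f i ∈ C k := by
    intro k
    rcases hdom _ _ ((hG.adj_inr_inr _ _).mpr ⟨hne k, hblk k⟩) with ⟨i, hi⟩ | ⟨i, hi⟩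
    · exact ⟨i, b k, rfl, hi.symm⟩
    · exact ⟨i, b' k, (hblk k).symm, hi.symm⟩
  have h3 := hf.card_le_of_pieces C hdisj _ hC hmeet
  rw [Fintype.card_fin] at h3
  exact absurd (h3.trans Finset.card_le_two) (by norm_num)

section AdjacentHubs

variable (hhub : G.Adj (inl 0) (inl 1))
include hhub

lemma adj_inl_of_ne {i : Fin 2} {x : Fin 2 ⊕ β} (hx : x ≠ inl i) : G.Adj (inl i) x := by
  rcases x with j | c
  · have hij : i ≠ j := fun h => hx (h ▸ rfl)
    fin_cases i <;> fin_cases j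
    exacts [absurd rfl hij, hhub, hhub.symm, absurd rfl hij]
  · exact hG.adj_inl_inr i c

lemma card_le_of_pairwise_not_adj {ι : Type*} [Nontrivial ι] [Finite γ] (w : ι → Fin 2 ⊕ β)
    (hw : Injective w) (hind : Pairwise fun a b => ¬G.Adj (w a) (w b)) :
    Nat.card ι ≤ Nat.card γ := by
  have hinr : ∀ a, ∃ c, w a = inr c := by
    intro a
    rcases ha : w a with i | c
    · obtain ⟨a', ha'⟩ := exists_ne a
      exact absurd (ha ▸ hG.adj_inl_of_ne hhub (ha ▸ hw.ne ha')) (hind ha'.symm)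
    · exact ⟨c, rfl⟩
  choose c hc using hinr
  refine Nat.card_le_card_of_injective (fun a => blk (c a)) fun a a' h => ?_
  by_contra hne
  refine hind hne ?_
  rw [hc, hc, hG.adj_inr_inr]
  exact ⟨fun h' => hne (hw (by rw [hc, hc, h'])), h⟩

lemma exists_eq_inl_of_adj_of_adj {x y z : Fin 2 ⊕ β} (hxy : G.Adj x y) (hxz : G.Adj x z)
    (hyz : y ≠ z) (hnyz : ¬G.Adj y z) : ∃ i, x = inl i := by
  rcases y with i | c
  · exact absurd (hG.adj_inl_of_ne hhub hyz.symm) hnyz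
  rcases z with i | d
  · exact absurd (hG.adj_inl_of_ne hhub hyz).symm hnyz
  rcases x with i | e
  · exact ⟨i, rfl⟩
  rw [hG.adj_inr_inr] at hxy hxz hnyz
  exact absurd ⟨fun h => hyz (h ▸ rfl), hxy.2.symm.trans hxz.2⟩ hnyz

end AdjacentHubs

end IsHubClusterJoin

end HubClusterJoin

section APrimeADoublePrime

open Sum

variable {s : ℕ}

lemma isHubClusterJoin_APrime : IsHubClusterJoin (APrime s) Prod.fst where
  adj_inl_inr i p := by
    simp only [APrime, fromRel_adj]
    exact ⟨by simp, Or.inl (Or.inl ⟨i, p, rfl, rfl⟩)⟩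
  adj_inr_inr := by
    rintro ⟨j, t⟩ ⟨k, u⟩
    simp only [APrime, fromRel_adj]
    fin_cases t <;> fin_cases u <;> simp [eq_comm]

lemma APrime_not_adj_inl (i j : Fin 2) : ¬(APrime s).Adj (inl i) (inl j) := by
  simp [APrime, fromRel_adj]

lemma isHubClusterJoin_ADoublePrime :
    IsHubClusterJoin (ADoublePrime s) (Sum.elim (fun p => some p.1) fun _ => none) where
  adj_inl_inr i p := by
    simp only [ADoublePrime, fromRel_adj]
    exact ⟨by simp, Or.inl (Or.inl ⟨i, rfl⟩)⟩
  adj_inr_inr := by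
    rintro (⟨j, t⟩ | p) (⟨k, u⟩ | q)
    · simp only [ADoublePrime, fromRel_adj]
      fin_cases t <;> fin_cases u <;> simp [eq_comm]
    all_goals simp [ADoublePrime, fromRel_adj]

lemma ADoublePrime_adj_inl : (ADoublePrime s).Adj (inl 0) (inl 1) := by
  simp only [ADoublePrime, fromRel_adj]
  exact ⟨by simp, Or.inl (Or.inl ⟨0, rfl⟩)⟩

lemma twoConnected_APrime (hs : 1 ≤ s) : TwoConnected (APrime s) :=
  have : NeZero s := ⟨by omega⟩
  isHubClusterJoin_APrime.twoConnected

lemma not_isDominatingCycle_APrime (hs : 3 ≤ s) {n : ℕ} (f : ZMod n → Fin 2 ⊕ Fin s × Fin 2) :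
    ¬IsDominatingCycle (APrime s) n f :=
  isHubClusterJoin_APrime.not_isDominatingCycle (fun k => (Fin.castLE hs k, 0))
    (fun k => (Fin.castLE hs k, 1)) (by simp) (fun _ => rfl) (Fin.castLE_injective hs) f

lemma twoConnected_ADoublePrime : TwoConnected (ADoublePrime s) :=
  have : Nontrivial (Fin 2 × Fin 2 ⊕ Fin s) := ⟨inl (0, 0), inl (0, 1), by simp⟩
  isHubClusterJoin_ADoublePrime.twoConnected

lemma not_isDominatingCycle_ADoublePrime (hs : 2 ≤ s) {n : ℕ}
    (f : ZMod n → Fin 2 ⊕ (Fin 2 × Fin 2 ⊕ Fin s)) : ¬IsDominatingCycle (ADoublePrime s) n f :=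
  isHubClusterJoin_ADoublePrime.not_isDominatingCycle ![inl (0, 0), inl (1, 0), inr ⟨0, by omega⟩]
    ![inl (0, 1), inl (1, 1), inr ⟨1, by omega⟩] (fun k => by fin_cases k <;> simp)
    (fun k => by fin_cases k <;> rfl)
    (fun a b => by fin_cases a <;> fin_cases b <;> simp) f

end APrimeADoublePrime

section Wgraph

instance : DecidableRel Wgraph.Adj := fun a b => decidable_of_iff _ (fromRel_adj _ a b).symm

def wVertex (a : Fin 3) (t : Fin 2) : Fin 7 := ⟨1 + 2 * a + t, by omega⟩

lemma Wgraph_adj_wVertex_iff {a b : Fin 3} {t u : Fin 2} :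
    Wgraph.Adj (wVertex a t) (wVertex b u) ↔ a = b ∧ t ≠ u := by
  revert a b t u; decide

lemma Wgraph_adj_zero_wVertex (a : Fin 3) (t : Fin 2) : Wgraph.Adj 0 (wVertex a t) := by
  revert a t; decide

lemma wVertex_ne_zero (a : Fin 3) (t : Fin 2) : wVertex a t ≠ 0 := by
  revert a t; decide

lemma wVertex_inj {a b : Fin 3} {t u : Fin 2} : wVertex a t = wVertex b u ↔ a = b ∧ t = u := by
  revert a b t u; decide

instance : DecidableRel K4minusGraph.Adj := fun a b => decidable_of_iff _ (fromRel_adj _ a b).symm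

end Wgraph

section Classification

open Sum

variable {U : Type*} {H : SimpleGraph U} {s : ℕ}

lemma nonempty_embedding_Wgraph_of_forall_ne_inl (e : H ↪g APrime s) {i : Fin 2}
    (hi : ∀ v, e v ≠ inl i) {ι : Fin s → Fin 3} (hι : Set.InjOn ι {j | ∃ v t, e v = inr (j, t)}) :
    Nonempty (H ↪g Wgraph) := by
  let φ : Fin 2 ⊕ Fin s × Fin 2 → Fin 7 := Sum.elim (fun _ => 0) fun p => wVertex (ι p.1) p.2
  have key : ∀ v w, (φ (e v) = φ (e w) ↔ e v = e w) ∧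
      (Wgraph.Adj (φ (e v)) (φ (e w)) ↔ (APrime s).Adj (e v) (e w)) := by
    intro v w
    rcases hev : e v with a | ⟨j, t⟩ <;> rcases hew : e w with b | ⟨k, u⟩
    · have ha : a ≠ i := fun h => hi v (by rw [hev, h])
      have hb : b ≠ i := fun h => hi w (by rw [hew, h])
      obtain rfl : a = b := by omega
      simp [φ]
    · simp [φ, (wVertex_ne_zero _ _).symm, Wgraph_adj_zero_wVertex,
        isHubClusterJoin_APrime.adj_inl_inr]
    · simp [φ, wVertex_ne_zero, (Wgraph_adj_zero_wVertex _ _).symm,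
        (isHubClusterJoin_APrime.adj_inl_inr _ _).symm]
    · have hjk : ι j = ι k ↔ j = k := ⟨fun h => hι ⟨v, t, hev⟩ ⟨w, u, hew⟩ h, congrArg ι⟩
      simp only [φ, Sum.elim_inr, wVertex_inj, Wgraph_adj_wVertex_iff, hjk, inr.injEq,
        Prod.mk.injEq, isHubClusterJoin_APrime.adj_inr_inr, ne_eq]
      tauto
  exact ⟨⟨⟨fun v => φ (e v), fun v w h => e.injective ((key v w).1.mp h)⟩,
    fun {v w} => (key v w).2.trans e.map_adj_iff⟩⟩

/-- Vertices of `H` in different blocks of `A′_s` are pairwise non-adjacent, and `A″_s` has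
independence number `3`. -/
lemma exists_injOn_blocks (e : H ↪g APrime s) (e' : H ↪g ADoublePrime s) :
    ∃ ι : Fin s → Fin 3, Set.InjOn ι {j | ∃ v t, e v = inr (j, t)} := by
  classical
  set J := {j | ∃ v t, e v = inr (j, t)}
  have hcard : Nat.card J ≤ 3 := by
    rcases subsingleton_or_nontrivial J with hJ | hJ
    · exact Finite.card_le_one_iff_subsingleton.mpr hJ |>.trans (by norm_num)
    choose rep t hrep using fun j : J => j.2
    have hblk : ∀ j j' : J, H.Adj (rep j) (rep j') → (j : Fin s) = j' := fun j j' h => by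
      have := e.map_adj_iff.mpr h
      rw [hrep, hrep, isHubClusterJoin_APrime.adj_inr_inr] at this
      exact this.2
    have := isHubClusterJoin_ADoublePrime.card_le_of_pairwise_not_adj ADoublePrime_adj_inl
      (fun j => e' (rep j))
      (fun j j' h => Subtype.ext (congrArg Prod.fst (inr_injective
        ((hrep j).symm.trans ((congrArg e (e'.injective h)).trans (hrep j'))))))
      (fun j j' hne h => hne (Subtype.ext (hblk j j' (e'.map_adj_iff.mp h))))
    simpa using this
  refine Set.exists_injOn_iff_injective.mpr ?_
  have : Nonempty (J ↪ Fin 3) := by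
    rw [Function.Embedding.nonempty_iff_card_le, Fintype.card_fin, ← Nat.card_eq_fintype_card]
    exact hcard
  obtain ⟨g⟩ := this
  exact ⟨g, g.injective⟩

lemma nonempty_embedding_Wgraph_of_adj_iff {h₀ h₁ u : U}
    (hadj : ∀ x y, H.Adj x y ↔ x ≠ y ∧ ((x ≠ h₀ ∧ x ≠ h₁) ∨ (y ≠ h₀ ∧ y ≠ h₁)))
    (hall : ∀ x, x = h₀ ∨ x = h₁ ∨ x = u)
    (h₀₁ : h₀ ≠ h₁) (h₀u : h₀ ≠ u) (h₁u : h₁ ≠ u) : Nonempty (H ↪g Wgraph) := by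
  classical
  let F : U → Fin 7 := fun x => if x = h₀ then 1 else if x = h₁ then 3 else 0
  have hF : ∀ x y, (F x = F y ↔ x = y) ∧ (Wgraph.Adj (F x) (F y) ↔ H.Adj x y) := by
    intro x y
    rw [hadj]
    rcases hall x with rfl | rfl | rfl <;> rcases hall y with rfl | rfl | rfl <;>
      simp [F, h₀₁, h₀u, h₁u, h₀₁.symm, h₀u.symm, h₁u.symm] <;> decide
  exact ⟨⟨⟨F, fun x y h => (hF x y).1.mp h⟩, fun {x y} => (hF x y).2⟩⟩

lemma nonempty_iso_K4minusGraph_of_adj_iff {h₀ h₁ u u' : U}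
    (hadj : ∀ x y, H.Adj x y ↔ x ≠ y ∧ ((x ≠ h₀ ∧ x ≠ h₁) ∨ (y ≠ h₀ ∧ y ≠ h₁)))
    (hall : ∀ x, x = u ∨ x = u' ∨ x = h₀ ∨ x = h₁)
    (hinj : Function.Injective ![u, u', h₀, h₁]) : Nonempty (H ≃g K4minusGraph) := by
  have hsurj : Function.Surjective ![u, u', h₀, h₁] := fun x => by
    rcases hall x with rfl | rfl | rfl | rfl
    exacts [⟨0, rfl⟩, ⟨1, rfl⟩, ⟨2, rfl⟩, ⟨3, rfl⟩]
  refine ⟨(RelIso.mk (Equiv.ofBijective _ ⟨hinj, hsurj⟩) fun {a b} => ?_).symm⟩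
  set g := ![u, u', h₀, h₁]
  change H.Adj (g a) (g b) ↔ _
  rw [hadj, hinj.ne_iff, show h₀ = g 2 from rfl, show h₁ = g 3 from rfl]
  simp only [hinj.ne_iff]
  revert a b; decide

section BothHubs

variable (e : H ↪g APrime s) {h₀ h₁ : U}
  (he₀ : e h₀ = inl 0) (he₁ : e h₁ = inl 1)
include he₀ he₁

lemma ne_of_eq_inl_of_eq_inl : h₀ ≠ h₁ := by
  rintro rfl
  exact inl_injective.ne (by decide) (he₀.symm.trans he₁)

lemma not_adj_of_eq_inl_of_eq_inl : ¬H.Adj h₀ h₁ := fun h =>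
  APrime_not_adj_inl 0 1 (he₀ ▸ he₁ ▸ e.map_adj_iff.mpr h)

/-- Every other vertex is a common neighbour of the non-adjacent `h₀, h₁`, hence it is a hub
of `A″_s`. -/
lemma adj_and_exists_eq_inl (e' : H ↪g ADoublePrime s) {x : U} (hx₀ : x ≠ h₀) (hx₁ : x ≠ h₁) :
    (H.Adj h₀ x ∧ H.Adj h₁ x) ∧ ∃ i, e' x = inl i := by
  obtain ⟨p, hp⟩ : ∃ p, e x = inr p := by
    rcases hx : e x with i | p
    · fin_cases i
      exacts [absurd (e.injective (hx.trans he₀.symm)) hx₀,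
        absurd (e.injective (hx.trans he₁.symm)) hx₁]
    · exact ⟨p, rfl⟩
  have had : H.Adj h₀ x ∧ H.Adj h₁ x :=
    ⟨e.map_adj_iff.mp (he₀ ▸ hp ▸ isHubClusterJoin_APrime.adj_inl_inr 0 p),
      e.map_adj_iff.mp (he₁ ▸ hp ▸ isHubClusterJoin_APrime.adj_inl_inr 1 p)⟩
  exact ⟨had, isHubClusterJoin_ADoublePrime.exists_eq_inl_of_adj_of_adj ADoublePrime_adj_inl
    (e'.map_adj_iff.mpr had.1.symm) (e'.map_adj_iff.mpr had.2.symm)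
    (e'.injective.ne (ne_of_eq_inl_of_eq_inl e he₀ he₁))
    (mt e'.map_adj_iff.mp (not_adj_of_eq_inl_of_eq_inl e he₀ he₁))⟩

lemma adj_iff_of_eq_inl_of_eq_inl (e' : H ↪g ADoublePrime s) (x y : U) :
    H.Adj x y ↔ x ≠ y ∧ ((x ≠ h₀ ∧ x ≠ h₁) ∨ (y ≠ h₀ ∧ y ≠ h₁)) := by
  have hn := not_adj_of_eq_inl_of_eq_inl e he₀ he₁
  have key : ∀ x y, x ≠ y → x ≠ h₀ → x ≠ h₁ → H.Adj x y := by
    intro x y hxy hx₀ hx₁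
    obtain ⟨⟨h₀x, h₁x⟩, i, hi⟩ := adj_and_exists_eq_inl e he₀ he₁ e' hx₀ hx₁
    rcases eq_or_ne y h₀ with rfl | hy₀
    · exact h₀x.symm
    rcases eq_or_ne y h₁ with rfl | hy₁
    · exact h₁x.symm
    rw [← e'.map_adj_iff, hi]
    exact isHubClusterJoin_ADoublePrime.adj_inl_of_ne ADoublePrime_adj_inl
      (hi ▸ e'.injective.ne hxy.symm)
  refine ⟨fun h => ⟨h.ne, ?_⟩, ?_⟩
  · by_contra! hxy
    rcases or_iff_not_imp_left.mpr hxy.1 with rfl | rfl <;>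
      rcases or_iff_not_imp_left.mpr hxy.2 with rfl | rfl
    exacts [h.ne rfl, hn h, hn h.symm, h.ne rfl]
  · rintro ⟨hxy, ⟨hx₀, hx₁⟩ | ⟨hy₀, hy₁⟩⟩
    exacts [key x y hxy hx₀ hx₁, (key y x hxy.symm hy₀ hy₁).symm]

lemma eq_or_eq_or_eq_of_ne_of_eq_inl (e' : H ↪g ADoublePrime s) {x y z : U} (hx₀ : x ≠ h₀)
    (hx₁ : x ≠ h₁) (hy₀ : y ≠ h₀) (hy₁ : y ≠ h₁) (hz₀ : z ≠ h₀) (hz₁ : z ≠ h₁) :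
    x = y ∨ x = z ∨ y = z := by
  obtain ⟨-, i, hi⟩ := adj_and_exists_eq_inl e he₀ he₁ e' hx₀ hx₁
  obtain ⟨-, j, hj⟩ := adj_and_exists_eq_inl e he₀ he₁ e' hy₀ hy₁
  obtain ⟨-, k, hk⟩ := adj_and_exists_eq_inl e he₀ he₁ e' hz₀ hz₁
  have : i = j ∨ i = k ∨ j = k := by omega
  rcases this with rfl | rfl | rfl
  exacts [Or.inl (e'.injective (hi.trans hj.symm)),
    Or.inr (Or.inl (e'.injective (hi.trans hk.symm))),
    Or.inr (Or.inr (e'.injective (hj.trans hk.symm)))]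

end BothHubs

lemma embedding_Wgraph_or_iso_K4minusGraph_of_eq_inl (hc : H.Connected) (e : H ↪g APrime s)
    (e' : H ↪g ADoublePrime s) {h₀ h₁ : U} (he₀ : e h₀ = inl 0) (he₁ : e h₁ = inl 1) :
    Nonempty (H ↪g Wgraph) ∨ Nonempty (H ≃g K4minusGraph) := by
  have hadj := adj_iff_of_eq_inl_of_eq_inl e he₀ he₁ e'
  have h₀₁ := ne_of_eq_inl_of_eq_inl e he₀ he₁
  have : Nontrivial U := ⟨⟨h₀, h₁, h₀₁⟩⟩
  obtain ⟨u, hu⟩ := hc.preconnected.exists_adj_of_nontrivial h₀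
  have hu₀ : u ≠ h₀ := hu.ne.symm
  have hu₁ : u ≠ h₁ := by rintro rfl; exact not_adj_of_eq_inl_of_eq_inl e he₀ he₁ hu
  by_cases hu' : ∃ u', u' ≠ h₀ ∧ u' ≠ h₁ ∧ u' ≠ u
  · obtain ⟨u', hu'₀, hu'₁, hu'u⟩ := hu'
    refine Or.inr (nonempty_iso_K4minusGraph_of_adj_iff (u := u) (u' := u') hadj (fun x => ?_) ?_)
    · by_contra! hx
      rcases eq_or_eq_or_eq_of_ne_of_eq_inl e he₀ he₁ e' hx.2.2.1 hx.2.2.2 hu₀ hu₁ hu'₀ hu'₁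
        with h | h | h
      exacts [hx.1 h, hx.2.1 h, hu'u h.symm]
    · intro a b
      fin_cases a <;> fin_cases b <;>
        simp [hu₀, hu₁, hu'₀, hu'₁, hu'u, h₀₁, hu₀.symm, hu₁.symm, hu'₀.symm, hu'₁.symm,
          hu'u.symm, h₀₁.symm]
  · push Not at hu'
    refine Or.inl (nonempty_embedding_Wgraph_of_adj_iff hadj (fun x => ?_) h₀₁ hu₀.symm hu₁.symm)
    by_cases hx₀ : x = h₀
    · exact Or.inl hx₀
    by_cases hx₁ : x = h₁
    · exact Or.inr (Or.inl hx₁)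
    exact Or.inr (Or.inr (hu' x hx₀ hx₁))

lemma embedding_Wgraph_or_iso_K4minusGraph (hc : H.Connected) (e : H ↪g APrime s)
    (e' : H ↪g ADoublePrime s) :
    Nonempty (H ↪g Wgraph) ∨ Nonempty (H ≃g K4minusGraph) := by
  by_cases hboth : (∃ h₀, e h₀ = inl 0) ∧ ∃ h₁, e h₁ = inl 1
  · obtain ⟨⟨h₀, he₀⟩, h₁, he₁⟩ := hboth
    exact embedding_Wgraph_or_iso_K4minusGraph_of_eq_inl hc e e' he₀ he₁
  obtain ⟨i, hi⟩ : ∃ i : Fin 2, ∀ v, e v ≠ inl i := by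
    rw [not_and_or, not_exists, not_exists] at hboth
    rcases hboth with h | h
    exacts [⟨0, h⟩, ⟨1, h⟩]
  obtain ⟨ι, hι⟩ := exists_injOn_blocks e e'
  exact Or.inl (nonempty_embedding_Wgraph_of_forall_ne_inl e hi hι)

end Classification

/-- If `{H₁, H₂}` is a forbidden pair forcing dominating cycles in all large 2-connected
graphs, and `H₁` has diameter at least 3, then `H₂` is an induced subgraph of
`K₁ + 3K₂` or is isomorphic to `K₄` minus an edge. -/
theorem stmt17 (m₁ m₂ : ℕ) (H₁ : SimpleGraph (Fin m₁)) (H₂ : SimpleGraph (Fin m₂))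
    (hc₁ : H₁.Connected) (hc₂ : H₂.Connected) (n₀ : ℕ)
    (hdom : ∀ (W : Type) [Fintype W] [DecidableEq W] (G : SimpleGraph W),
        TwoConnected G → n₀ ≤ Fintype.card W →
        ¬ Nonempty (H₁ ↪g G) → ¬ Nonempty (H₂ ↪g G) →
        ∃ (n : ℕ) (f : ZMod n → W), IsDominatingCycle G n f)
    (hdiam : ∃ a b : Fin m₁, 3 ≤ H₁.dist a b) :
    Nonempty (H₂ ↪g Wgraph) ∨ Nonempty (H₂ ≃g K4minusGraph) := by
  obtain ⟨a, b, hab⟩ := hdiam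
  have hP4 := hasInducedP4_of_three_le_dist hc₁ hab
  have forced : ∀ (W : Type) [Fintype W] [DecidableEq W] (G : SimpleGraph W),
      TwoConnected G → n₀ ≤ Fintype.card W → ¬HasInducedP4 G →
      (∀ n f, ¬IsDominatingCycle G n f) → Nonempty (H₂ ↪g G) := by
    intro W _ _ G hG hcard hfree hnodom
    by_contra hH₂
    obtain ⟨n, f, hf⟩ := hdom W G hG hcard (fun ⟨φ⟩ => hfree (hP4.map φ)) hH₂
    exact hnodom n f hf
  obtain ⟨e⟩ := forced _ (APrime (max 3 n₀)) (twoConnected_APrime (by omega))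
    (by simp only [Fintype.card_sum, Fintype.card_prod, Fintype.card_fin]; omega)
    isHubClusterJoin_APrime.not_hasInducedP4 fun _ => not_isDominatingCycle_APrime (by omega)
  obtain ⟨e'⟩ := forced _ (ADoublePrime (max 3 n₀)) twoConnected_ADoublePrime
    (by simp only [Fintype.card_sum, Fintype.card_prod, Fintype.card_fin]; omega)
    isHubClusterJoin_ADoublePrime.not_hasInducedP4
    fun _ => not_isDominatingCycle_ADoublePrime (by omega)
  exact embedding_Wgraph_or_iso_K4minusGraph hc₂ e e'
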